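/- The theta function of the Construction A lattice equals the complete weight enumerator evaluated at theta functions: for a linear code C ⊆ F_p^n (p prime), Σ_{λ ∈ Λ(C)} q^{λ²/2} = W_C({θ_a(τ)}), where θ_a(τ) = Σ_{k ∈ ℤ} q^{(p/2)(k + a/p)²}. -/

import Mathlib

open scoped BigOperators

/-- Construction A lattice of a code `C ⊆ 𝔽_p^n`. -/
noncomputable def constructionA (p n : ℕ) (C : Set (Fin n → ZMod p)) : Set (Fin n → ℝ) :=
  {x | ∃ v : Fin n → ℤ, (∀ i, x i = (v i : ℝ) / Real.sqrt p) ∧ (fun i => ((v i : ZMod p))) ∈ C}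

/-- `wt_a(c) = |{ i : c_i = a }|`. -/
def wtA {p n : ℕ} (a : ZMod p) (c : Fin n → ZMod p) : ℕ :=
  (Finset.univ.filter fun i => c i = a).card

open Classical in
/-- Complete weight enumerator `W_C({x_a}) = Σ_{c ∈ C} Π_a x_a^{wt_a(c)}`. -/
noncomputable def cwe (p n : ℕ) [NeZero p] (C : Set (Fin n → ZMod p)) (x : ZMod p → ℂ) : ℂ :=
  ∑ c ∈ Finset.univ.filter (fun c => c ∈ C), ∏ a : ZMod p, x a ^ wtA a c

/-- `θ_a(τ) = Σ_{k ∈ ℤ} q^{(p/2)(k + a/p)²}` with `q = e^{2πiτ}`. -/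
noncomputable def thetaA (p : ℕ) (a : ℕ) (τ : ℂ) : ℂ :=
  ∑' k : ℤ, Complex.exp (2 * Real.pi * Complex.I * τ * ((p : ℂ) / 2) *
    ((k : ℂ) + (a : ℂ) / (p : ℂ)) ^ 2)

/-!
Write a lattice vector as `λ = v / √p` with `v ∈ ℤⁿ` reducing mod `p` into `C`; then
`q^{λ²/2} = ∏ᵢ q^{vᵢ²/(2p)}` factors over the coordinates. Every such `v` is uniquely
`c + p m` with `c` the lift of a codeword to `{0, …, p-1}ⁿ` and `m ∈ ℤⁿ`, and summing the
product over `m` gives `∏ᵢ θ_{cᵢ}(τ)`; grouping equal coordinates yields `∏ₐ θₐ^{wtₐ(c)}`.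
Since `Im τ > 0` every series converges absolutely, which justifies the rearrangements.
The one-dimensional terms `q^{k²/(2p)}` are Mathlib's `jacobiTheta₂_term k 0 (τ / p)`.
-/

open Complex

section PiProduct

variable {R β : Type*} [NormedCommRing R]

theorem summable_norm_prod_pi {n : ℕ} {f : Fin n → β → R}
    (hf : ∀ i, Summable fun k => ‖f i k‖) :
    Summable fun m : Fin n → β => ‖∏ i, f i (m i)‖ := by
  induction n with
  | zero => exact .of_finite
  | succ n ih =>
    rw [← (Fin.consEquiv fun _ => β).summable_iff]
    simpa [Function.comp_def, Fin.prod_univ_succ] using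
      (hf 0).mul_norm (ih fun i => hf i.succ)

theorem tsum_prod_pi [CompleteSpace R] {n : ℕ} {f : Fin n → β → R}
    (hf : ∀ i, Summable fun k => ‖f i k‖) :
    ∑' m : Fin n → β, ∏ i, f i (m i) = ∏ i, ∑' k, f i k := by
  induction n with
  | zero => simp
  | succ n ih =>
    rw [← (Fin.consEquiv fun _ => β).tsum_eq, Fin.prod_univ_succ, ← ih fun i => hf i.succ,
      tsum_mul_tsum_of_summable_norm (hf 0) (summable_norm_prod_pi fun i => hf i.succ)]
    simp [Fin.prod_univ_succ]

end PiProduct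

theorem prod_apply_eq_prod_pow_wtA {p n : ℕ} [NeZero p] {M : Type*} [CommMonoid M]
    (c : Fin n → ZMod p) (x : ZMod p → M) :
    ∏ i, x (c i) = ∏ a : ZMod p, x a ^ wtA a c := by
  classical
  rw [← Finset.prod_fiberwise' Finset.univ c x]
  exact Finset.prod_congr rfl fun a _ => by rw [Finset.prod_const, wtA]

theorem cwe_eq_tsum {p n : ℕ} [NeZero p] (C : Set (Fin n → ZMod p)) (x : ZMod p → ℂ) :
    cwe p n C x = ∑' c : C, ∏ i, x ((c : Fin n → ZMod p) i) := by
  classical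
  rw [tsum_fintype, cwe, Finset.sum_subtype (p := (· ∈ C)) _ fun c => by simp]
  exact Finset.sum_congr rfl fun c _ => (prod_apply_eq_prod_pow_wtA c.1 x).symm

theorem constructionA_eq_image (p n : ℕ) (C : Set (Fin n → ZMod p)) :
    constructionA p n C = (fun v : Fin n → ℤ => fun i => (v i : ℝ) / Real.sqrt p) ''
      {v | (fun i => (v i : ZMod p)) ∈ C} := by
  ext x
  simp only [constructionA, Set.mem_ofPred_eq, Set.mem_image, funext_iff]
  exact exists_congr fun v => ⟨fun ⟨hx, hv⟩ => ⟨hv, fun i => (hx i).symm⟩,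
    fun ⟨hv, hx⟩ => ⟨fun i => (hx i).symm, hv⟩⟩

theorem injective_div_sqrt {p n : ℕ} (hp : p ≠ 0) :
    Function.Injective fun v : Fin n → ℤ => fun i => (v i : ℝ) / Real.sqrt p := by
  intro v w h
  funext i
  have hsqrt : Real.sqrt p ≠ 0 := by positivity
  exact_mod_cast (div_left_inj' hsqrt).mp (congrFun h i)

/-- Splitting `v = c + p m` coordinatewise, with `c` the lift of a codeword to `{0, …, p-1}ⁿ`. -/
def codewordLiftEquiv (p n : ℕ) [NeZero p] (C : Set (Fin n → ZMod p)) :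
    C × (Fin n → ℤ) ≃ {v : Fin n → ℤ | (fun i => (v i : ZMod p)) ∈ C} where
  toFun x := ⟨fun i => ((x.1 : Fin n → ZMod p) i).val + p * x.2 i, by simp [x.1.2]⟩
  invFun v := (⟨fun i => (v.1 i : ZMod p), v.2⟩, fun i => v.1 i / p)
  left_inv x := by
    have hp : (p : ℤ) ≠ 0 := by exact_mod_cast NeZero.ne p
    ext i
    · simp
    · simp only
      rw [Int.add_mul_ediv_left _ _ hp, Int.ediv_eq_zero_of_lt (by positivity)
        (by exact_mod_cast ZMod.val_lt _), zero_add]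
  right_inv v := by
    ext i
    simp only
    rw [ZMod.val_intCast, Int.emod_add_mul_ediv]

theorem cexp_sqNorm_div_sqrt_eq_prod (p n : ℕ) (τ : ℂ) (v : Fin n → ℤ) :
    cexp (2 * Real.pi * I * τ * ((∑ i, ((v i : ℝ) / Real.sqrt p) ^ 2 : ℝ) : ℂ) / 2) =
      ∏ i, jacobiTheta₂_term (v i) 0 (τ / p) := by
  simp only [jacobiTheta₂_term, ← Complex.exp_sum, div_pow, Real.sq_sqrt (Nat.cast_nonneg p)]
  congr 1
  push_cast
  rw [Finset.mul_sum, Finset.sum_div]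
  exact Finset.sum_congr rfl fun i _ => by ring

theorem summable_norm_jacobiTheta₂_term {p : ℕ} (hp : p ≠ 0) {τ : ℂ} (hτ : 0 < τ.im) :
    Summable fun k : ℤ => ‖jacobiTheta₂_term k 0 (τ / p)‖ := by
  refine summable_norm_iff.mpr ((summable_jacobiTheta₂_term_iff _ _).mpr ?_)
  rw [Complex.div_natCast_im]
  exact div_pos hτ (by exact_mod_cast Nat.pos_of_ne_zero hp)

theorem thetaA_eq_tsum_jacobiTheta₂_term {p : ℕ} (hp : p ≠ 0) (a : ℕ) (τ : ℂ) :
    thetaA p a τ = ∑' k : ℤ, jacobiTheta₂_term (a + p * k) 0 (τ / p) := by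
  have hpC : (p : ℂ) ≠ 0 := Nat.cast_ne_zero.mpr hp
  refine tsum_congr fun k => congrArg cexp ?_
  push_cast
  field_simp
  ring

theorem tsum_constructionA_eq_tsum_prod {p n : ℕ} (hp : p ≠ 0) (C : Set (Fin n → ZMod p))
    (τ : ℂ) :
    ∑' x : constructionA p n C, cexp (2 * Real.pi * I * τ *
        ((∑ i, (x : Fin n → ℝ) i ^ 2 : ℝ) : ℂ) / 2) =
      ∑' v : {v : Fin n → ℤ | (fun i => (v i : ZMod p)) ∈ C},
        ∏ i, jacobiTheta₂_term (v.1 i) 0 (τ / p) := by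
  rw [constructionA_eq_image]
  refine (tsum_image (fun x : Fin n → ℝ =>
    cexp (2 * Real.pi * I * τ * ((∑ i, x i ^ 2 : ℝ) : ℂ) / 2))
    (injective_div_sqrt hp).injOn).trans ?_
  exact tsum_congr fun v => cexp_sqNorm_div_sqrt_eq_prod p n τ v

theorem tsum_prod_jacobiTheta₂_term_lift {p n : ℕ} [NeZero p] {τ : ℂ} (hτ : 0 < τ.im)
    (c : Fin n → ZMod p) :
    ∑' m : Fin n → ℤ, ∏ i, jacobiTheta₂_term ((c i).val + p * m i) 0 (τ / p) =
      ∏ i, thetaA p (c i).val τ := by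
  have hp : p ≠ 0 := NeZero.ne p
  rw [tsum_prod_pi (f := fun i k => jacobiTheta₂_term ((c i).val + p * k) 0 (τ / p))
    fun i => (summable_norm_jacobiTheta₂_term hp hτ).comp_injective ?_]
  · exact Finset.prod_congr rfl fun i _ => (thetaA_eq_tsum_jacobiTheta₂_term hp _ τ).symm
  · exact (add_right_injective _).comp (mul_right_injective₀ (by exact_mod_cast hp))

/-- The theta function of the Construction A lattice equals the complete weight
enumerator evaluated at the theta functions `θ_a`:
`Σ_{λ ∈ Λ(C)} q^{λ²/2} = W_C({θ_a(τ)})`. -/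
theorem constructionA_theta (p n : ℕ) [Fact p.Prime]
    (C : Submodule (ZMod p) (Fin n → ZMod p)) (τ : ℂ) (hτ : 0 < τ.im) :
    (∑' x : constructionA p n (C : Set (Fin n → ZMod p)),
        Complex.exp (2 * Real.pi * Complex.I * τ *
          ((∑ i, (x : Fin n → ℝ) i ^ 2 : ℝ) : ℂ) / 2)) =
      cwe p n (C : Set (Fin n → ZMod p)) (fun a => thetaA p a.val τ) := by
  have hp : p ≠ 0 := (Fact.out : p.Prime).ne_zero
  set S : Set (Fin n → ZMod p) := (C : Set (Fin n → ZMod p))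
  set t : ℤ → ℂ := fun k => jacobiTheta₂_term k 0 (τ / p)
  set e := codewordLiftEquiv p n S
  have hsum : Summable ((fun v : {v : Fin n → ℤ | (fun i => (v i : ZMod p)) ∈ S} =>
      ∏ i, t (v.1 i)) ∘ e) :=
    e.summable_iff.mpr
      ((summable_norm_prod_pi fun _ => summable_norm_jacobiTheta₂_term hp hτ).of_norm.subtype _)
  calc _ = ∑' v : {v : Fin n → ℤ | (fun i => (v i : ZMod p)) ∈ S}, ∏ i, t (v.1 i) :=
        tsum_constructionA_eq_tsum_prod hp S τ
    _ = ∑' c : S, ∑' m : Fin n → ℤ, ∏ i, t (((c : Fin n → ZMod p) i).val + p * m i) :=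
        (e.tsum_eq _).symm.trans hsum.tsum_prod
    _ = ∑' c : S, ∏ i, thetaA p ((c : Fin n → ZMod p) i).val τ :=
        tsum_congr fun c => tsum_prod_jacobiTheta₂_term_lift hτ c.1
    _ = _ := (cwe_eq_tsum S fun a => thetaA p a.val τ).symm
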